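/- Let δ ∈ (0,1], L = ⌈1/δ⌉, G > 0, let C be a δ-contractive compressor, and let (α_t)_{t ≥ 1} be a positive nondecreasing sequence. Let g_i^t ∈ ℝ^d (i ∈ {1,…,n}, t ≥ 1) satisfy ‖g_i^t‖ ≤ G almost surely, with g_i^t depending only on compressor invocations from rounds before t. Define e_i¹ = 0, v_i^t = FCC(e_i^t + α_t g_i^t, C, L), e_i^{t+1} = e_i^t + α_t g_i^t − v_i^t, v^t = (1/n) Σ_{i=1}^n v_i^t, ê¹ = 0, and ê^{t+1} = ê^t + v^t − FCC(ê^t + v^t, C, L). Then for every t ≥ 1, (1/n) Σ_{i=1}^n E[‖e_i^{t+1}‖²] ≤ 4 e² α_t² G² and E[‖ê^{t+1}‖²] ≤ 120 e² α_t² G², where e is Euler's number. -/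

import Mathlib

open MeasureTheory Real
open scoped ENNReal NNReal BigOperators RealInnerProductSpace

lemma en_young (x y : ℝ≥0∞) : (x + y) ^ 2 ≤ 2 * x ^ 2 + 2 * y ^ 2 := by
  rcases eq_or_ne x ⊤ with rfl | hx
  · simp [ENNReal.top_pow]
  rcases eq_or_ne y ⊤ with rfl | hy
  · simp [ENNReal.top_pow]
  lift x to ℝ≥0 using hx
  lift y to ℝ≥0 using hy
  have h : ((x + y) : ℝ≥0) ^ 2 ≤ 2 * x ^ 2 + 2 * y ^ 2 := by
    rw [← NNReal.coe_le_coe]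
    push_cast
    nlinarith [sq_nonneg ((x : ℝ) - (y : ℝ))]
  exact_mod_cast h

lemma en_nnnorm_add_sq {E : Type*} [SeminormedAddGroup E] (a b : E) :
    ((‖a + b‖₊ : ℝ≥0∞)) ^ 2 ≤ 2 * (‖a‖₊ : ℝ≥0∞) ^ 2 + 2 * (‖b‖₊ : ℝ≥0∞) ^ 2 := by
  calc ((‖a + b‖₊ : ℝ≥0∞)) ^ 2 ≤ ((‖a‖₊ : ℝ≥0∞) + (‖b‖₊ : ℝ≥0∞)) ^ 2 := by
        gcongr
        exact_mod_cast nnnorm_add_le a b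
    _ ≤ _ := en_young _ _

lemma lint_sq_add_le {Ω : Type*} [MeasurableSpace Ω] (μ : Measure Ω) {d : ℕ}
    (f h : Ω → EuclideanSpace ℝ (Fin d)) (hf : Measurable f) :
    ∫⁻ ω, (‖f ω + h ω‖₊ : ℝ≥0∞) ^ 2 ∂μ
      ≤ 2 * ∫⁻ ω, (‖f ω‖₊ : ℝ≥0∞) ^ 2 ∂μ + 2 * ∫⁻ ω, (‖h ω‖₊ : ℝ≥0∞) ^ 2 ∂μ := by
  calc ∫⁻ ω, (‖f ω + h ω‖₊ : ℝ≥0∞) ^ 2 ∂μ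
      ≤ ∫⁻ ω, (2 * (‖f ω‖₊ : ℝ≥0∞) ^ 2 + 2 * (‖h ω‖₊ : ℝ≥0∞) ^ 2) ∂μ :=
        lintegral_mono fun ω => en_nnnorm_add_sq _ _
    _ = (∫⁻ ω, 2 * (‖f ω‖₊ : ℝ≥0∞) ^ 2 ∂μ) + ∫⁻ ω, 2 * (‖h ω‖₊ : ℝ≥0∞) ^ 2 ∂μ :=
        lintegral_add_left ((hf.nnnorm.coe_nnreal_ennreal.pow_const 2).const_mul 2) _
    _ = _ := by rw [lintegral_const_mul' 2 _ (by norm_num), lintegral_const_mul' 2 _ (by norm_num)]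

lemma en_jensen {n : ℕ} (hn : 1 ≤ n) (a : ℕ → ℝ≥0∞) :
    ((n : ℝ≥0∞)⁻¹ * ∑ i ∈ Finset.Icc 1 n, a i) ^ 2
      ≤ (n : ℝ≥0∞)⁻¹ * ∑ i ∈ Finset.Icc 1 n, (a i) ^ 2 := by
  have hw : ∑ _i ∈ Finset.Icc 1 n, (n : ℝ≥0∞)⁻¹ = 1 := by
    rw [Finset.sum_const, Nat.card_Icc]
    simp only [Nat.add_sub_cancel, nsmul_eq_mul]
    rw [ENNReal.mul_inv_cancel (by exact_mod_cast Nat.one_le_iff_ne_zero.mp hn) (by simp)]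
  have h := ENNReal.rpow_arith_mean_le_arith_mean_rpow (Finset.Icc 1 n)
    (fun _ => (n : ℝ≥0∞)⁻¹) a hw (p := 2) one_le_two
  rw [Finset.mul_sum, Finset.mul_sum]
  have h2 : ∀ x : ℝ≥0∞, x ^ (2 : ℝ) = x ^ 2 := fun x => by
    rw [show (2:ℝ) = ((2:ℕ):ℝ) by norm_num, ENNReal.rpow_natCast]
  rw [← h2]
  simpa [h2] using h

lemma en_avg_le {n : ℕ} (hn : 1 ≤ n) (c : ℝ≥0∞) (f : ℕ → ℝ≥0∞)
    (hf : ∀ i ∈ Finset.Icc 1 n, f i ≤ c) :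
    (n : ℝ≥0∞)⁻¹ * ∑ i ∈ Finset.Icc 1 n, f i ≤ c := by
  calc (n : ℝ≥0∞)⁻¹ * ∑ i ∈ Finset.Icc 1 n, f i
      ≤ (n : ℝ≥0∞)⁻¹ * ∑ _i ∈ Finset.Icc 1 n, c := by
        gcongr with i hi
        exact hf i hi
    _ = (n : ℝ≥0∞)⁻¹ * ((n : ℝ≥0∞) * c) := by
        rw [Finset.sum_const, Nat.card_Icc, Nat.add_sub_cancel, nsmul_eq_mul]
    _ = c := by
        rw [← mul_assoc,
          ENNReal.inv_mul_cancel (by exact_mod_cast Nat.one_le_iff_ne_zero.mp hn) (by simp),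
          one_mul]

lemma en_two_ofReal (x : ℝ) : 2 * ENNReal.ofReal x = ENNReal.ofReal (2 * x) := by
  rw [ENNReal.ofReal_mul (by norm_num)]
  norm_num

lemma exp_facts : 2.71 < exp 1 ∧ (exp 1)⁻¹ ≤ 0.37 := by
  have h : 2.71 < exp 1 := by
    have := Real.exp_one_gt_d9
    norm_num at this ⊢
    linarith
  refine ⟨h, ?_⟩
  rw [inv_le_comm₀ (by linarith) (by norm_num)]
  linarith

lemma rho_le_inv_e (δ : ℝ) (hδ0 : 0 < δ) (hδ1 : δ ≤ 1) (L : ℕ) (hL : L = ⌈1 / δ⌉₊) :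
    (1 - δ) ^ L ≤ (exp 1)⁻¹ := by
  have h1 : (1 : ℝ) - δ ≤ exp (-δ) := by linarith [Real.add_one_le_exp (-δ)]
  have h0 : (0:ℝ) ≤ 1 - δ := by linarith
  calc (1 - δ) ^ L ≤ exp (-δ) ^ L := pow_le_pow_left₀ h0 h1 L
    _ = exp (-(δ * L)) := by rw [← Real.exp_nat_mul]; ring_nf
    _ ≤ exp (-1) := by
        apply Real.exp_le_exp.mpr
        have hceil : 1 / δ ≤ (L : ℝ) := by rw [hL]; exact Nat.le_ceil _
        have h2 : 1 ≤ δ * L := by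
          have := (div_le_iff₀ hδ0).mp hceil
          nlinarith
        linarith
    _ = (exp 1)⁻¹ := by rw [Real.exp_neg]

set_option maxHeartbeats 1000000 in
/-- error-feedback bounds for the weighted distributed online-to-batch
conversion. Let `δ ∈ (0,1]`, `L = ⌈1/δ⌉`, `C` a `δ`-contractive compressor,
`(α_t)` a positive nondecreasing sequence, and `g_i^t` random vectors with `‖g_i^t‖ ≤ G`
a.s. With the bidirectional error-feedback recursions `e_i¹ = 0`,
`v_i^t = FCC(e_i^t + α_t g_i^t, C, L)`, `e_i^{t+1} = e_i^t + α_t g_i^t − v_i^t`,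
`v^t = (1/n) Σ_i v_i^t`, `ê¹ = 0`, `ê^{t+1} = ê^t + v^t − FCC(ê^t + v^t, C, L)`, one has
for every `t ≥ 1` that `(1/n) Σ_i E[‖e_i^{t+1}‖²] ≤ 4e²α_t²G²` and
`E[‖ê^{t+1}‖²] ≤ 120e²α_t²G²`, where `e` is Euler's number.

The FCC guarantee `E[‖FCC(x,C,L) − x‖²] ≤ (1−δ)^L E[‖x‖²]` for inputs depending only on
past invocations is encoded by the hypotheses `hFCClearner` and `hFCCserver` (the server-side
FCC output is the random vector `s t`). -/
theorem o2b_error_feedback_bounds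
    {d n : ℕ} (hn : 1 ≤ n)
    {Ω : Type*} [MeasurableSpace Ω] (μ : Measure Ω) [IsProbabilityMeasure μ]
    (δ G : ℝ) (hδ0 : 0 < δ) (hδ1 : δ ≤ 1) (hG : 0 < G)
    (L : ℕ) (hL : L = ⌈1 / δ⌉₊)
    (α : ℕ → ℝ) (hαpos : ∀ t, 0 < α t) (hαmono : Monotone α)
    (g v e : ℕ → ℕ → Ω → EuclideanSpace ℝ (Fin d))
    (vbar s ehat : ℕ → Ω → EuclideanSpace ℝ (Fin d))
    (hmg : ∀ i t, Measurable (g i t)) (hmv : ∀ i t, Measurable (v i t))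
    (hms : ∀ t, Measurable (s t))
    (hGbound : ∀ i ∈ Finset.Icc 1 n, ∀ t, 1 ≤ t → ∀ᵐ ω ∂μ, ‖g i t ω‖ ≤ G)
    (he1 : ∀ i, e i 1 = fun _ => 0)
    (herec : ∀ i, ∀ t, 1 ≤ t → ∀ ω,
      e i (t + 1) ω = e i t ω + α t • g i t ω - v i t ω)
    (hvbar : ∀ t ω, vbar t ω = (n : ℝ)⁻¹ • ∑ i ∈ Finset.Icc 1 n, v i t ω)
    (hehat1 : ehat 1 = fun _ => 0)
    (hehatrec : ∀ t, 1 ≤ t → ∀ ω, ehat (t + 1) ω = ehat t ω + vbar t ω - s t ω)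
    (hFCClearner : ∀ i ∈ Finset.Icc 1 n, ∀ t, 1 ≤ t →
      ∫⁻ ω, (‖v i t ω - (e i t ω + α t • g i t ω)‖₊ : ℝ≥0∞) ^ 2 ∂μ
        ≤ ENNReal.ofReal ((1 - δ) ^ L) *
          ∫⁻ ω, (‖e i t ω + α t • g i t ω‖₊ : ℝ≥0∞) ^ 2 ∂μ)
    (hFCCserver : ∀ t, 1 ≤ t →
      ∫⁻ ω, (‖s t ω - (ehat t ω + vbar t ω)‖₊ : ℝ≥0∞) ^ 2 ∂μ
        ≤ ENNReal.ofReal ((1 - δ) ^ L) *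
          ∫⁻ ω, (‖ehat t ω + vbar t ω‖₊ : ℝ≥0∞) ^ 2 ∂μ) :
    ∀ t, 1 ≤ t →
      (n : ℝ≥0∞)⁻¹ * ∑ i ∈ Finset.Icc 1 n, ∫⁻ ω, (‖e i (t + 1) ω‖₊ : ℝ≥0∞) ^ 2 ∂μ
          ≤ ENNReal.ofReal (4 * Real.exp 1 ^ 2 * α t ^ 2 * G ^ 2) ∧
        ∫⁻ ω, (‖ehat (t + 1) ω‖₊ : ℝ≥0∞) ^ 2 ∂μ
          ≤ ENNReal.ofReal (120 * Real.exp 1 ^ 2 * α t ^ 2 * G ^ 2) := by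
  have hexp := exp_facts
  have hαt : ∀ t, (0:ℝ) < α t := hαpos
  have hρ : ENNReal.ofReal ((1 - δ) ^ L) ≤ ENNReal.ofReal (exp 1)⁻¹ :=
    ENNReal.ofReal_le_ofReal (rho_le_inv_e δ hδ0 hδ1 L hL)
  -- measurability of e i t for t ≥ 1
  have hme : ∀ i t, 1 ≤ t → Measurable (e i t) := by
    intro i t
    induction t with
    | zero => omega
    | succ t ih =>
      intro _
      rcases Nat.eq_zero_or_pos t with rfl | ht
      · rw [he1 i]; exact measurable_const
      · have : e i (t + 1) = fun ω => e i t ω + α t • g i t ω - v i t ω :=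
          funext (herec i t ht)
        rw [this]
        exact ((ih ht).add ((hmg i t).const_smul (α t))).sub (hmv i t)
  have hmvbar : ∀ t, Measurable (vbar t) := by
    intro t
    have : vbar t = fun ω => (n : ℝ)⁻¹ • ∑ i ∈ Finset.Icc 1 n, v i t ω :=
      funext (hvbar t)
    rw [this]
    exact (Finset.measurable_sum _ fun i _ => hmv i t).const_smul ((n : ℝ)⁻¹)
  have hmehat : ∀ t, 1 ≤ t → Measurable (ehat t) := by
    intro t
    induction t with
    | zero => omega
    | succ t ih =>
      intro _
      rcases Nat.eq_zero_or_pos t with rfl | ht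
      · rw [hehat1]; exact measurable_const
      · have : ehat (t + 1) = fun ω => ehat t ω + vbar t ω - s t ω :=
          funext (hehatrec t ht)
        rw [this]
        exact ((ih ht).add (hmvbar t)).sub (hms t)
  -- bound on the ∫ ‖α•g‖² term
  have hag : ∀ i ∈ Finset.Icc 1 n, ∀ t, 1 ≤ t →
      ∫⁻ ω, (‖α t • g i t ω‖₊ : ℝ≥0∞) ^ 2 ∂μ ≤ ENNReal.ofReal (α t ^ 2 * G ^ 2) := by
    intro i hi t ht
    have hae := hGbound i hi t ht
    calc ∫⁻ ω, (‖α t • g i t ω‖₊ : ℝ≥0∞) ^ 2 ∂μ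
        ≤ ∫⁻ _ω, ENNReal.ofReal (α t ^ 2 * G ^ 2) ∂μ := by
          apply lintegral_mono_ae
          filter_upwards [hae] with ω hω
          have h1 : (‖α t • g i t ω‖₊ : ℝ≥0∞) ≤ ENNReal.ofReal (α t * G) := by
            rw [← enorm_eq_nnnorm, ← ofReal_norm]
            apply ENNReal.ofReal_le_ofReal
            rw [norm_smul, Real.norm_eq_abs, abs_of_pos (hαpos t)]
            exact mul_le_mul_of_nonneg_left hω (le_of_lt (hαpos t))
          calc (‖α t • g i t ω‖₊ : ℝ≥0∞) ^ 2 ≤ ENNReal.ofReal (α t * G) ^ 2 := by gcongr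
            _ = ENNReal.ofReal (α t ^ 2 * G ^ 2) := by
                rw [← ENNReal.ofReal_pow (mul_nonneg (le_of_lt (hαpos t)) hG.le)]
                congr 1
                ring
      _ = ENNReal.ofReal (α t ^ 2 * G ^ 2) := by
          rw [lintegral_const, measure_univ, mul_one]
  -- bound on ∫ ‖e + α•g‖²
  have hEA : ∀ i ∈ Finset.Icc 1 n, ∀ t, 1 ≤ t →
      (∫⁻ ω, (‖e i t ω‖₊ : ℝ≥0∞) ^ 2 ∂μ
          ≤ ENNReal.ofReal (4 * exp 1 ^ 2 * α t ^ 2 * G ^ 2)) →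
      ∫⁻ ω, (‖e i t ω + α t • g i t ω‖₊ : ℝ≥0∞) ^ 2 ∂μ
        ≤ ENNReal.ofReal ((8 * exp 1 ^ 2 + 2) * (α t ^ 2 * G ^ 2)) := by
    intro i hi t ht hIe
    calc ∫⁻ ω, (‖e i t ω + α t • g i t ω‖₊ : ℝ≥0∞) ^ 2 ∂μ
        ≤ 2 * ∫⁻ ω, (‖e i t ω‖₊ : ℝ≥0∞) ^ 2 ∂μ
            + 2 * ∫⁻ ω, (‖α t • g i t ω‖₊ : ℝ≥0∞) ^ 2 ∂μ :=
          lint_sq_add_le μ _ _ (hme i t ht)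
      _ ≤ 2 * ENNReal.ofReal (4 * exp 1 ^ 2 * α t ^ 2 * G ^ 2)
            + 2 * ENNReal.ofReal (α t ^ 2 * G ^ 2) := by
          gcongr
          all_goals first
            | exact hag i hi t ht
            | exact hIe
      _ = ENNReal.ofReal ((8 * exp 1 ^ 2 + 2) * (α t ^ 2 * G ^ 2)) := by
          rw [en_two_ofReal, en_two_ofReal, ← ENNReal.ofReal_add (by positivity) (by positivity)]
          congr 1
          ring
  -- one learner step
  have estep : ∀ t, 1 ≤ t → ∀ i ∈ Finset.Icc 1 n,
      (∫⁻ ω, (‖e i t ω‖₊ : ℝ≥0∞) ^ 2 ∂μ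
          ≤ ENNReal.ofReal (4 * exp 1 ^ 2 * α t ^ 2 * G ^ 2)) →
      ∫⁻ ω, (‖e i (t + 1) ω‖₊ : ℝ≥0∞) ^ 2 ∂μ
        ≤ ENNReal.ofReal (4 * exp 1 ^ 2 * α t ^ 2 * G ^ 2) := by
    intro t ht i hi hIe
    have hnorm : ∀ ω, (‖e i (t + 1) ω‖₊ : ℝ≥0∞) ^ 2
        = (‖v i t ω - (e i t ω + α t • g i t ω)‖₊ : ℝ≥0∞) ^ 2 := by
      intro ω
      have h0 : e i (t + 1) ω = -(v i t ω - (e i t ω + α t • g i t ω)) := by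
        rw [herec i t ht ω]; abel
      rw [h0, nnnorm_neg]
    calc ∫⁻ ω, (‖e i (t + 1) ω‖₊ : ℝ≥0∞) ^ 2 ∂μ
        = ∫⁻ ω, (‖v i t ω - (e i t ω + α t • g i t ω)‖₊ : ℝ≥0∞) ^ 2 ∂μ :=
          lintegral_congr hnorm
      _ ≤ ENNReal.ofReal ((1 - δ) ^ L) *
            ∫⁻ ω, (‖e i t ω + α t • g i t ω‖₊ : ℝ≥0∞) ^ 2 ∂μ := hFCClearner i hi t ht
      _ ≤ ENNReal.ofReal (exp 1)⁻¹ *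
            ENNReal.ofReal ((8 * exp 1 ^ 2 + 2) * (α t ^ 2 * G ^ 2)) :=
          mul_le_mul' hρ (hEA i hi t ht hIe)
      _ = ENNReal.ofReal ((exp 1)⁻¹ * ((8 * exp 1 ^ 2 + 2) * (α t ^ 2 * G ^ 2))) := by
          rw [← ENNReal.ofReal_mul (by positivity)]
      _ ≤ ENNReal.ofReal (4 * exp 1 ^ 2 * α t ^ 2 * G ^ 2) := by
          apply ENNReal.ofReal_le_ofReal
          have hc : (exp 1)⁻¹ * (8 * exp 1 ^ 2 + 2) ≤ 4 * exp 1 ^ 2 := by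
            obtain ⟨h, hi'⟩ := hexp
            have h0 : (0:ℝ) < exp 1 := by linarith
            have hi0 : (0:ℝ) ≤ (exp 1)⁻¹ := by positivity
            nlinarith [mul_inv_cancel₀ (ne_of_gt h0)]
          have hpos : (0:ℝ) ≤ α t ^ 2 * G ^ 2 := by positivity
          nlinarith [mul_le_mul_of_nonneg_right hc hpos]
  -- learner error bound for all t
  have elem : ∀ t, 1 ≤ t → ∀ i ∈ Finset.Icc 1 n,
      ∫⁻ ω, (‖e i t ω‖₊ : ℝ≥0∞) ^ 2 ∂μ
        ≤ ENNReal.ofReal (4 * exp 1 ^ 2 * α t ^ 2 * G ^ 2) := by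
    intro t ht
    induction t, ht using Nat.le_induction with
    | base =>
      intro i _
      rw [he1 i]
      simp
    | succ t ht ih =>
      intro i hi
      calc ∫⁻ ω, (‖e i (t + 1) ω‖₊ : ℝ≥0∞) ^ 2 ∂μ
          ≤ ENNReal.ofReal (4 * exp 1 ^ 2 * α t ^ 2 * G ^ 2) :=
            estep t ht i hi (ih i hi)
        _ ≤ ENNReal.ofReal (4 * exp 1 ^ 2 * α (t + 1) ^ 2 * G ^ 2) := by
            apply ENNReal.ofReal_le_ofReal
            have h2 : α t ≤ α (t + 1) := hαmono (Nat.le_succ t)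
            have h1 := (hαpos t).le
            gcongr
  -- bound on each ∫ ‖v i t‖²
  have hIv : ∀ t, 1 ≤ t → ∀ i ∈ Finset.Icc 1 n,
      ∫⁻ ω, (‖v i t ω‖₊ : ℝ≥0∞) ^ 2 ∂μ
        ≤ ENNReal.ofReal ((2 + 2 * (exp 1)⁻¹) * ((8 * exp 1 ^ 2 + 2) * (α t ^ 2 * G ^ 2))) := by
    intro t ht i hi
    have hEA' := hEA i hi t ht (elem t ht i hi)
    have hpt : ∀ ω, v i t ω
        = (e i t ω + α t • g i t ω) + (v i t ω - (e i t ω + α t • g i t ω)) := by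
      intro ω; abel
    calc ∫⁻ ω, (‖v i t ω‖₊ : ℝ≥0∞) ^ 2 ∂μ
        = ∫⁻ ω, (‖(e i t ω + α t • g i t ω)
            + (v i t ω - (e i t ω + α t • g i t ω))‖₊ : ℝ≥0∞) ^ 2 ∂μ :=
          lintegral_congr fun ω => by rw [← hpt ω]
      _ ≤ 2 * ∫⁻ ω, (‖e i t ω + α t • g i t ω‖₊ : ℝ≥0∞) ^ 2 ∂μ
            + 2 * ∫⁻ ω, (‖v i t ω - (e i t ω + α t • g i t ω)‖₊ : ℝ≥0∞) ^ 2 ∂μ :=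
          lint_sq_add_le μ _ _ ((hme i t ht).add ((hmg i t).const_smul (α t)))
      _ ≤ 2 * ∫⁻ ω, (‖e i t ω + α t • g i t ω‖₊ : ℝ≥0∞) ^ 2 ∂μ
            + 2 * (ENNReal.ofReal ((1 - δ) ^ L) *
              ∫⁻ ω, (‖e i t ω + α t • g i t ω‖₊ : ℝ≥0∞) ^ 2 ∂μ) := by
          gcongr
          all_goals exact hFCClearner i hi t ht
      _ ≤ 2 * ENNReal.ofReal ((8 * exp 1 ^ 2 + 2) * (α t ^ 2 * G ^ 2))
            + 2 * (ENNReal.ofReal (exp 1)⁻¹ *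
              ENNReal.ofReal ((8 * exp 1 ^ 2 + 2) * (α t ^ 2 * G ^ 2))) := by
          gcongr
          all_goals exact mul_le_mul' hρ hEA'
      _ = ENNReal.ofReal ((2 + 2 * (exp 1)⁻¹) * ((8 * exp 1 ^ 2 + 2) * (α t ^ 2 * G ^ 2))) := by
          rw [← ENNReal.ofReal_mul (by positivity), en_two_ofReal, en_two_ofReal,
            ← ENNReal.ofReal_add (by positivity) (by positivity)]
          congr 1
          ring
  -- bound on ∫ ‖vbar t‖²
  have hvb : ∀ t, 1 ≤ t →
      ∫⁻ ω, (‖vbar t ω‖₊ : ℝ≥0∞) ^ 2 ∂μ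
        ≤ ENNReal.ofReal ((2 + 2 * (exp 1)⁻¹) * ((8 * exp 1 ^ 2 + 2) * (α t ^ 2 * G ^ 2))) := by
    intro t ht
    have hn0 : (n : ℝ≥0∞) ≠ 0 := by exact_mod_cast Nat.one_le_iff_ne_zero.mp hn
    have hpt : ∀ ω, (‖vbar t ω‖₊ : ℝ≥0∞) ^ 2
        ≤ (n : ℝ≥0∞)⁻¹ * ∑ i ∈ Finset.Icc 1 n, (‖v i t ω‖₊ : ℝ≥0∞) ^ 2 := by
      intro ω
      have h1 : (‖vbar t ω‖₊ : ℝ≥0∞)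
          ≤ (n : ℝ≥0∞)⁻¹ * ∑ i ∈ Finset.Icc 1 n, (‖v i t ω‖₊ : ℝ≥0∞) := by
        rw [hvbar t ω, nnnorm_smul]
        push_cast
        rw [nnnorm_inv]
        have hnn : (‖(n : ℝ)‖₊ : ℝ≥0∞) = (n : ℝ≥0∞) := by
          simp [Real.nnnorm_natCast]
        rw [ENNReal.coe_inv (by simp [Nat.one_le_iff_ne_zero.mp hn]), hnn]
        gcongr
        calc (‖∑ i ∈ Finset.Icc 1 n, v i t ω‖₊ : ℝ≥0∞)
            ≤ ((∑ i ∈ Finset.Icc 1 n, ‖v i t ω‖₊ : ℝ≥0) : ℝ≥0∞) := by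
              exact_mod_cast nnnorm_sum_le _ _
          _ = ∑ i ∈ Finset.Icc 1 n, (‖v i t ω‖₊ : ℝ≥0∞) := by push_cast; rfl
      calc (‖vbar t ω‖₊ : ℝ≥0∞) ^ 2
          ≤ ((n : ℝ≥0∞)⁻¹ * ∑ i ∈ Finset.Icc 1 n, (‖v i t ω‖₊ : ℝ≥0∞)) ^ 2 := by gcongr
        _ ≤ _ := en_jensen hn _
    calc ∫⁻ ω, (‖vbar t ω‖₊ : ℝ≥0∞) ^ 2 ∂μ
        ≤ ∫⁻ ω, (n : ℝ≥0∞)⁻¹ * ∑ i ∈ Finset.Icc 1 n, (‖v i t ω‖₊ : ℝ≥0∞) ^ 2 ∂μ :=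
          lintegral_mono hpt
      _ = (n : ℝ≥0∞)⁻¹ * ∑ i ∈ Finset.Icc 1 n, ∫⁻ ω, (‖v i t ω‖₊ : ℝ≥0∞) ^ 2 ∂μ := by
          rw [lintegral_const_mul' _ _ (by simp [hn0]),
            lintegral_finset_sum _ fun i _ => ((hmv i t).nnnorm.coe_nnreal_ennreal.pow_const 2)]
      _ ≤ _ := en_avg_le hn _ _ fun i hi => hIv t ht i hi
  -- one server step
  have hatstep : ∀ t, 1 ≤ t →
      (∫⁻ ω, (‖ehat t ω‖₊ : ℝ≥0∞) ^ 2 ∂μ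
          ≤ ENNReal.ofReal (120 * exp 1 ^ 2 * α t ^ 2 * G ^ 2)) →
      ∫⁻ ω, (‖ehat (t + 1) ω‖₊ : ℝ≥0∞) ^ 2 ∂μ
        ≤ ENNReal.ofReal (120 * exp 1 ^ 2 * α t ^ 2 * G ^ 2) := by
    intro t ht hIe
    have hnorm : ∀ ω, (‖ehat (t + 1) ω‖₊ : ℝ≥0∞) ^ 2
        = (‖s t ω - (ehat t ω + vbar t ω)‖₊ : ℝ≥0∞) ^ 2 := by
      intro ω
      have h0 : ehat (t + 1) ω = -(s t ω - (ehat t ω + vbar t ω)) := by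
        rw [hehatrec t ht ω]; abel
      rw [h0, nnnorm_neg]
    calc ∫⁻ ω, (‖ehat (t + 1) ω‖₊ : ℝ≥0∞) ^ 2 ∂μ
        = ∫⁻ ω, (‖s t ω - (ehat t ω + vbar t ω)‖₊ : ℝ≥0∞) ^ 2 ∂μ := lintegral_congr hnorm
      _ ≤ ENNReal.ofReal ((1 - δ) ^ L) *
            ∫⁻ ω, (‖ehat t ω + vbar t ω‖₊ : ℝ≥0∞) ^ 2 ∂μ := hFCCserver t ht
      _ ≤ ENNReal.ofReal (exp 1)⁻¹ *
            (2 * ∫⁻ ω, (‖ehat t ω‖₊ : ℝ≥0∞) ^ 2 ∂μ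
              + 2 * ∫⁻ ω, (‖vbar t ω‖₊ : ℝ≥0∞) ^ 2 ∂μ) :=
          mul_le_mul' hρ (lint_sq_add_le μ _ _ (hmehat t ht))
      _ ≤ ENNReal.ofReal (exp 1)⁻¹ *
            (2 * ENNReal.ofReal (120 * exp 1 ^ 2 * α t ^ 2 * G ^ 2)
              + 2 * ENNReal.ofReal
                ((2 + 2 * (exp 1)⁻¹) * ((8 * exp 1 ^ 2 + 2) * (α t ^ 2 * G ^ 2)))) := by
          gcongr
          all_goals first
            | exact hvb t ht
            | exact hIe
      _ = ENNReal.ofReal ((exp 1)⁻¹ *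
            (2 * (120 * exp 1 ^ 2 * α t ^ 2 * G ^ 2)
              + 2 * ((2 + 2 * (exp 1)⁻¹) * ((8 * exp 1 ^ 2 + 2) * (α t ^ 2 * G ^ 2))))) := by
          rw [en_two_ofReal, en_two_ofReal,
            ← ENNReal.ofReal_add (by positivity) (by positivity),
            ← ENNReal.ofReal_mul (by positivity)]
      _ ≤ ENNReal.ofReal (120 * exp 1 ^ 2 * α t ^ 2 * G ^ 2) := by
          apply ENNReal.ofReal_le_ofReal
          have hc : (exp 1)⁻¹ *
              (2 * (120 * exp 1 ^ 2) + 2 * ((2 + 2 * (exp 1)⁻¹) * (8 * exp 1 ^ 2 + 2)))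
              ≤ 120 * exp 1 ^ 2 := by
            obtain ⟨h, hi'⟩ := hexp
            have h0 : (0:ℝ) < exp 1 := by linarith
            have hi0 : (0:ℝ) ≤ (exp 1)⁻¹ := by positivity
            nlinarith [mul_inv_cancel₀ (ne_of_gt h0), sq_nonneg (exp 1)]
          have hpos : (0:ℝ) ≤ α t ^ 2 * G ^ 2 := by positivity
          nlinarith [mul_le_mul_of_nonneg_right hc hpos]
  -- server error bound for all t
  have hatlem : ∀ t, 1 ≤ t →
      ∫⁻ ω, (‖ehat t ω‖₊ : ℝ≥0∞) ^ 2 ∂μ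
        ≤ ENNReal.ofReal (120 * exp 1 ^ 2 * α t ^ 2 * G ^ 2) := by
    intro t ht
    induction t, ht using Nat.le_induction with
    | base =>
      rw [hehat1]
      simp
    | succ t ht ih =>
      calc ∫⁻ ω, (‖ehat (t + 1) ω‖₊ : ℝ≥0∞) ^ 2 ∂μ
          ≤ ENNReal.ofReal (120 * exp 1 ^ 2 * α t ^ 2 * G ^ 2) := hatstep t ht ih
        _ ≤ ENNReal.ofReal (120 * exp 1 ^ 2 * α (t + 1) ^ 2 * G ^ 2) := by
            apply ENNReal.ofReal_le_ofReal
            have h2 : α t ≤ α (t + 1) := hαmono (Nat.le_succ t)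
            have h1 := (hαpos t).le
            gcongr
  -- conclude
  intro t ht
  constructor
  · exact en_avg_le hn _ _ fun i hi => estep t ht i hi (elem t ht i hi)
  · exact hatstep t ht (hatlem t ht)
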